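/- (Scalar case of Proposition 1: Rodrigues formula for Jacobi polynomials.) For all real α, β, every integer k ≥ 0 and every real x > 1, the k-th derivative at x of the function t ↦ (t−1)^{k+α}·(t+1)^{k+β} (real powers, t ∈ (1,∞)) equals (x−1)^α·(x+1)^β · p_k(x), where p_k(x) denotes the evaluation at x of the polynomial p_k = a₁a₂⋯aₖ 1. -/

import Mathlib

open Polynomial

/-- The operator `aⱼ p = ((α+β+2j)·x + (α−β))·p + (x²−1)·p′` on `ℝ[x]`. -/
noncomputable def aOp (α β : ℝ) (j : ℕ) (p : Polynomial ℝ) : Polynomial ℝ :=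
  (Polynomial.C (α + β + 2 * (j : ℝ)) * Polynomial.X + Polynomial.C (α - β)) * p +
    (Polynomial.X ^ 2 - 1) * Polynomial.derivative p

/-- The composition `a₁a₂⋯aₖ` on `ℝ[x]` (identity for `k = 0`). -/
noncomputable def aIter (α β : ℝ) : ℕ → Polynomial ℝ → Polynomial ℝ
  | 0 => id
  | (k + 1) => fun p => aIter α β k (aOp α β (k + 1) p)

/-- The polynomial `pₖ = a₁a₂⋯aₖ 1` (with `p₀ = 1`); up to a nonzero constant factor it is
the Jacobi polynomial `P_k^{(α,β)}`. -/
noncomputable def pJ (α β : ℝ) (k : ℕ) : Polynomial ℝ :=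
  aIter α β k 1

lemma deriv_step (α β : ℝ) (k : ℕ) (p : Polynomial ℝ) (t : ℝ) (ht : 1 < t) :
    deriv (fun s : ℝ => (s - 1) ^ (((k:ℝ)+1) + α) * (s + 1) ^ (((k:ℝ)+1) + β) * p.eval s) t
      = (t - 1) ^ ((k:ℝ) + α) * (t + 1) ^ ((k:ℝ) + β) * (aOp α β (k+1) p).eval t := by
  have h1 : (0:ℝ) < t - 1 := by linarith
  have h2 : (0:ℝ) < t + 1 := by linarith
  have d1 : HasDerivAt (fun s : ℝ => (s - 1) ^ (((k:ℝ)+1) + α))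
      ((((k:ℝ)+1) + α) * (t - 1) ^ ((k:ℝ) + α)) t := by
    have := (Real.hasDerivAt_rpow_const (x := t - 1) (p := ((k:ℝ)+1) + α) (Or.inl h1.ne'))
    have := this.comp t ((hasDerivAt_id t).sub_const 1)
    simpa [Function.comp_def, show ((k:ℝ)+1) + α - 1 = (k:ℝ) + α by ring] using this
  have d2 : HasDerivAt (fun s : ℝ => (s + 1) ^ (((k:ℝ)+1) + β))
      ((((k:ℝ)+1) + β) * (t + 1) ^ ((k:ℝ) + β)) t := by
    have := (Real.hasDerivAt_rpow_const (x := t + 1) (p := ((k:ℝ)+1) + β) (Or.inl h2.ne'))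
    have := this.comp t ((hasDerivAt_id t).add_const 1)
    simpa [Function.comp_def, show ((k:ℝ)+1) + β - 1 = (k:ℝ) + β by ring] using this
  have dp : HasDerivAt (fun s : ℝ => p.eval s) ((Polynomial.derivative p).eval t) t :=
    p.hasDerivAt t
  have D := ((d1.mul d2).mul dp).deriv
  change deriv (((fun s : ℝ => (s - 1) ^ (((k:ℝ)+1) + α)) * fun s : ℝ => (s + 1) ^ (((k:ℝ)+1) + β)) * fun s : ℝ => p.eval s) t = _
  rw [D]
  simp only [Pi.mul_apply]
  have e1 : (t - 1) ^ (((k:ℝ)+1) + α) = (t - 1) ^ ((k:ℝ) + α) * (t - 1) := by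
    rw [show ((k:ℝ)+1) + α = ((k:ℝ) + α) + 1 by ring, Real.rpow_add h1, Real.rpow_one]
  have e2 : (t + 1) ^ (((k:ℝ)+1) + β) = (t + 1) ^ ((k:ℝ) + β) * (t + 1) := by
    rw [show ((k:ℝ)+1) + β = ((k:ℝ) + β) + 1 by ring, Real.rpow_add h2, Real.rpow_one]
  rw [e1, e2]
  simp only [aOp, Polynomial.eval_add, Polynomial.eval_mul, Polynomial.eval_C,
    Polynomial.eval_X, Polynomial.eval_pow, Polynomial.eval_sub, Polynomial.eval_one]
  push_cast
  ring

lemma key (α β : ℝ) (k : ℕ) (p : Polynomial ℝ) (x : ℝ) (hx : 1 < x) :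
    iteratedDeriv k (fun t : ℝ => (t - 1) ^ ((k:ℝ) + α) * (t + 1) ^ ((k:ℝ) + β) * p.eval t) x
      = (x - 1) ^ α * (x + 1) ^ β * (aIter α β k p).eval x := by
  induction k generalizing p with
  | zero => simp [aIter, mul_assoc]
  | succ k ih =>
    rw [iteratedDeriv_succ']
    have hev : (deriv (fun t : ℝ => (t - 1) ^ (((k+1:ℕ):ℝ) + α) * (t + 1) ^ (((k+1:ℕ):ℝ) + β) * p.eval t))
        =ᶠ[nhds x] (fun t : ℝ => (t - 1) ^ ((k:ℝ) + α) * (t + 1) ^ ((k:ℝ) + β) * (aOp α β (k+1) p).eval t) := by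
      filter_upwards [eventually_gt_nhds hx] with t ht
      have := deriv_step α β k p t ht
      push_cast
      push_cast at this
      exact this
    rw [hev.iteratedDeriv_eq k, ih (aOp α β (k+1) p)]
    rfl

/-- (Scalar case of Proposition 1: Rodrigues formula for Jacobi polynomials.)
For all real `α, β`, every `k ≥ 0` and every real `x > 1`, the `k`-th derivative at `x`
of `t ↦ (t−1)^{k+α}·(t+1)^{k+β}` (real powers) equals `(x−1)^α·(x+1)^β · pₖ(x)`. -/
theorem stmt_11 (α β : ℝ) (k : ℕ) (x : ℝ) (hx : 1 < x) :
    iteratedDeriv k (fun t : ℝ => (t - 1) ^ ((k : ℝ) + α) * (t + 1) ^ ((k : ℝ) + β)) x =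
      (x - 1) ^ α * (x + 1) ^ β * (pJ α β k).eval x := by
  have := key α β k 1 x hx
  simpa [pJ] using this
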